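/- arXiv:2112.04109 — 4 statements merged into one kernel-verified Lean document; each statement's English description precedes it below -/
import Mathlib

section
/- Let S be a finite set, ex ⊆ S, and let Λ : S × S → ℤ be a skew-symmetric integer matrix and B : S × ex → ℤ an integer matrix. Suppose (Λ,B) is a compatible pair, i.e. Λ·B = −2E where E : S × ex → ℤ satisfies E_{st} = 0 unless s = t ∈ ex, and e_s := E_{ss} > 0 for every s ∈ ex. Then the principal part of B is skew-symmetrisable: for all s,t ∈ ex one has e_s·B_{st} = −e_t·B_{ts}; in particular B_{ss} = 0 for every s ∈ ex. -/
open Matrix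

/-- Let `S` be a finite set, `ex ⊆ S`, `Λ : S × S → ℤ` skew-symmetric and
`B : S × ex → ℤ`. If `(Λ, B)` is a compatible pair, i.e. `Λ·B = −2E` where `E` vanishes off
the `ex`-diagonal and has strictly positive diagonal entries `e_s = E_{ss}` for `s ∈ ex`,
then the principal part of `B` is skew-symmetrisable: `e_s·B_{st} = −e_t·B_{ts}` for all
`s, t ∈ ex`; in particular `B_{ss} = 0` for every `s ∈ ex`. -/
theorem stmt0 {S : Type*} [Fintype S] [DecidableEq S] (ex : Finset S)
    (Λ : Matrix S S ℤ) (B E : Matrix S (↥ex) ℤ)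
    (hΛskew : Λᵀ = -Λ)
    (hcomp : Λ * B = (-2 : ℤ) • E)
    (hEoff : ∀ (s : S) (t : ex), s ≠ (t : S) → E s t = 0)
    (hEpos : ∀ t : ex, 0 < E (t : S) t) :
    (∀ s t : ex, E (s : S) s * B (s : S) t = -(E (t : S) t * B (t : S) s)) ∧
      (∀ s : ex, B (s : S) s = 0) := by
  -- The matrix M = Bᵀ Λ B
  have hM : Bᵀ * Λ * B = (-2 : ℤ) • (Bᵀ * E) := by
    rw [Matrix.mul_assoc, hcomp, Matrix.mul_smul]
  have hskew : (Bᵀ * Λ * B)ᵀ = -(Bᵀ * Λ * B) := by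
    rw [Matrix.transpose_mul, Matrix.transpose_mul, Matrix.transpose_transpose, hΛskew]
    simp [Matrix.mul_assoc, Matrix.neg_mul, Matrix.mul_neg]
  have hentry : ∀ s t : ex, (Bᵀ * E) s t = B (t : S) s * E (t : S) t := by
    intro s t
    rw [Matrix.mul_apply]
    rw [Finset.sum_eq_single_of_mem (t : S) (Finset.mem_univ _)]
    · rfl
    · intro u _ hu
      rw [hEoff u t hu, mul_zero]
  have key : ∀ s t : ex, E (s : S) s * B (s : S) t = -(E (t : S) t * B (t : S) s) := by
    intro s t
    have h1 : (Bᵀ * Λ * B) t s = -((Bᵀ * Λ * B) s t) := congrFun (congrFun hskew s) t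
    rw [hM] at h1
    simp only [Matrix.smul_apply, hentry, smul_eq_mul] at h1
    linarith
  refine ⟨key, fun s => ?_⟩
  have h := key s s
  have he := hEpos s
  have h2 : E (s : S) s * B (s : S) s = 0 := by linarith
  rcases mul_eq_zero.mp h2 with h3 | h3
  · omega
  · exact h3
end

section
/- Let (Λ,B) be a compatible pair with Λ·B = −2E as above, and fix k ∈ ex. Define the mutated matrices: B'_{ij} = −B_{ij} if i = k or j = k, and B'_{ij} = B_{ij} + (|B_{ik}|·B_{kj} + B_{ik}·|B_{kj}|)/2 otherwise (for i ∈ S, j ∈ ex); and Λ'_{st} = Λ_{st} if s ≠ k and t ≠ k, Λ'_{kt} = −Λ_{kt} + Σ_{i∈S, i≠k} max(B_{ik},0)·Λ_{it} for t ≠ k, Λ'_{tk} = −Λ'_{kt} for t ≠ k, and Λ'_{kk} = 0. Then Λ' is skew-symmetric and Λ'·B' = −2E; in particular the mutated pair (Λ',B') is again a compatible pair. -/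
open Matrix

lemma habs_aux (b c : ℤ) : (|b| * c + b * |c|) / 2 = max b 0 * c + b * max (-c) 0 := by
  have h : |b| * c + b * |c| = 2 * (max b 0 * c + b * max (-c) 0) := by
    rcases le_total 0 b with hb | hb <;> rcases le_total 0 c with hc | hc
    · rw [abs_of_nonneg hb, abs_of_nonneg hc, max_eq_left hb,
        max_eq_right (neg_nonpos.mpr hc)]; ring
    · rw [abs_of_nonneg hb, abs_of_nonpos hc, max_eq_left hb,
        max_eq_left (neg_nonneg.mpr hc)]; ring
    · rw [abs_of_nonpos hb, abs_of_nonneg hc, max_eq_right hb,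
        max_eq_right (neg_nonpos.mpr hc)]; ring
    · rw [abs_of_nonpos hb, abs_of_nonpos hc, max_eq_right hb,
        max_eq_left (neg_nonneg.mpr hc)]; ring
  rw [h, Int.mul_ediv_cancel_left _ (by norm_num)]

lemma skew_double_aux {S : Type*} [Fintype S] (Λ : Matrix S S ℤ) (hΛ : Λᵀ = -Λ)
    (f : S → ℤ) (s : Finset S) :
    ∑ i ∈ s, ∑ j ∈ s, f i * Λ i j * f j = 0 := by
  have h : ∀ i j, Λ j i = -Λ i j := fun i j => by
    have := congrFun (congrFun hΛ i) j
    simpa [Matrix.transpose_apply] using this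
  have h2 : (∑ i ∈ s, ∑ j ∈ s, f i * Λ i j * f j) +
      (∑ i ∈ s, ∑ j ∈ s, f i * Λ i j * f j) = 0 := by
    nth_rewrite 2 [Finset.sum_comm]
    rw [← Finset.sum_add_distrib]
    refine Finset.sum_eq_zero fun i _ => ?_
    rw [← Finset.sum_add_distrib]
    refine Finset.sum_eq_zero fun j _ => ?_
    rw [h i j]; ring
  linarith

/-- Let `(Λ, B)` be a compatible pair, `Λ·B = −2E`, and fix `k ∈ ex`.
Define the mutated matrices `B'` (Fomin–Zelevinsky mutation of `B` in direction `k`) and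
`Λ'` (Berenstein–Zelevinsky mutation of `Λ` in direction `k`, determined by
`Λ'_{st} = Λ_{st}` for `s, t ≠ k`, `Λ'_{kt} = −Λ_{kt} + Σ_{i ≠ k} max(B_{ik},0)·Λ_{it}`
for `t ≠ k`, `Λ'_{tk} = −Λ'_{kt}` and `Λ'_{kk} = 0`). Then `Λ'` is skew-symmetric and
`Λ'·B' = −2E`; in particular `(Λ', B')` is again a compatible pair. -/
theorem stmt1 {S : Type*} [Fintype S] [DecidableEq S] (ex : Finset S)
    (Λ Λ' : Matrix S S ℤ) (B B' E : Matrix S (↥ex) ℤ)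
    (hΛskew : Λᵀ = -Λ)
    (hcomp : Λ * B = (-2 : ℤ) • E)
    (hEoff : ∀ (s : S) (t : ex), s ≠ (t : S) → E s t = 0)
    (hEpos : ∀ t : ex, 0 < E (t : S) t)
    (k : ex)
    (hB'1 : ∀ (i : S) (j : ex), i = (k : S) ∨ j = k → B' i j = -B i j)
    (hB'2 : ∀ (i : S) (j : ex), i ≠ (k : S) → j ≠ k →
      B' i j = B i j + (|B i k| * B (k : S) j + B i k * |B (k : S) j|) / 2)
    (hΛ'1 : ∀ s t : S, s ≠ (k : S) → t ≠ (k : S) → Λ' s t = Λ s t)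
    (hΛ'2 : ∀ t : S, t ≠ (k : S) →
      Λ' (k : S) t = -Λ (k : S) t +
        ∑ i ∈ Finset.univ.filter (fun i => i ≠ (k : S)), max (B i k) 0 * Λ i t)
    (hΛ'3 : ∀ t : S, t ≠ (k : S) → Λ' t (k : S) = -Λ' (k : S) t)
    (hΛ'4 : Λ' (k : S) (k : S) = 0) :
    Λ'ᵀ = -Λ' ∧ Λ' * B' = (-2 : ℤ) • E := by
  classical
  have hsk : ∀ a b : S, Λ b a = -Λ a b := fun a b => by
    have := congrFun (congrFun hΛskew a) b
    simpa [Matrix.transpose_apply] using this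
  have hΛkk : ∀ a : S, Λ a a = 0 := fun a => by
    have := hsk a a; linarith
  -- the filter set is the erase set
  have hfil : Finset.univ.filter (fun i => i ≠ (k : S)) = Finset.univ.erase (k : S) := by
    ext i; simp [Finset.mem_erase, and_comm]
  -- key skew-symmetry relation from compatibility
  have hMskew : (Bᵀ * Λ * B)ᵀ = -(Bᵀ * Λ * B) := by
    simp [Matrix.transpose_mul, Matrix.transpose_transpose, hΛskew,
      Matrix.neg_mul, Matrix.mul_neg, Matrix.mul_assoc]
  have hEntry : ∀ i j : ex, (Bᵀ * Λ * B) i j = -2 * (B (j : S) i * E (j : S) j) := by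
    intro i j
    rw [Matrix.mul_assoc, hcomp]
    rw [Matrix.mul_apply]
    rw [Finset.sum_eq_single (j : S)]
    · simp [Matrix.transpose_apply]; ring
    · intro s _ hs
      simp [Matrix.transpose_apply, hEoff s j hs]
    · simp
  have hkey : ∀ i j : ex, E (j : S) j * B (j : S) i = -(E (i : S) i * B (i : S) j) := by
    intro i j
    have h1 := congrFun (congrFun hMskew j) i
    simp only [Matrix.transpose_apply, Matrix.neg_apply] at h1
    rw [hEntry i j, hEntry j i] at h1
    nlinarith [h1]
  have hBkk : B (k : S) k = 0 := by
    have h := hkey k k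
    have h2 : E (k : S) k * B (k : S) k = 0 := by linarith
    exact (mul_eq_zero.mp h2).resolve_left (hEpos k).ne'
  -- mutation matrices
  set G : Matrix S S ℤ := Matrix.of fun i t =>
    if t = (k : S) then (if i = (k : S) then -1 else max (B i k) 0)
    else (if i = t then 1 else 0) with hGdef
  set Q : Matrix ex ex ℤ := Matrix.of fun t j =>
    if t = k then (if j = k then -1 else max (-(B (k : S) j)) 0)
    else (if t = j then 1 else 0) with hQdef
  -- helper: dot a vector with a column of G (G on the left)
  have hcolG1 : ∀ (v : S → ℤ) (s : S), (∑ i, G i s * v i) =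
      if s = (k : S) then -v (k : S) + ∑ i ∈ Finset.univ.erase (k : S), max (B i k) 0 * v i
      else v s := by
    intro v s
    by_cases hs : s = (k : S)
    · subst hs
      rw [if_pos rfl, ← Finset.add_sum_erase _ _ (Finset.mem_univ (k : S))]
      congr 1
      · simp [hGdef]
      · refine Finset.sum_congr rfl fun i hi => ?_
        have hi' : i ≠ (k : S) := (Finset.mem_erase.mp hi).1
        simp [hGdef, hi']
    · rw [if_neg hs, Finset.sum_eq_single s]
      · simp [hGdef, hs]
      · intro i _ his
        simp [hGdef, hs, his]
      · simp
  -- helper: dot a vector with a column of G (G on the right)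
  have hcolG2 : ∀ (w : S → ℤ) (t : S), (∑ j, w j * G j t) =
      if t = (k : S) then -w (k : S) + ∑ j ∈ Finset.univ.erase (k : S), max (B j k) 0 * w j
      else w t := by
    intro w t
    rw [show (∑ j, w j * G j t) = ∑ j, G j t * w j from
      Finset.sum_congr rfl fun j _ => mul_comm _ _, hcolG1]
  -- helper: dot a vector with a row of G
  have hrowG : ∀ (v : S → ℤ) (i : S), (∑ s, G i s * v s) =
      if i = (k : S) then -v (k : S) else v i + max (B i k) 0 * v (k : S) := by
    intro v i
    by_cases hik : i = (k : S)
    · subst hik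
      rw [if_pos rfl, Finset.sum_eq_single (k : S)]
      · simp [hGdef]
      · intro s _ hs; simp [hGdef, hs, Ne.symm hs]
      · simp
    · rw [if_neg hik, ← Finset.add_sum_erase _ _ (Finset.mem_univ (k : S)), add_comm]
      congr 1
      · rw [Finset.sum_eq_single_of_mem i (Finset.mem_erase.mpr ⟨hik, Finset.mem_univ i⟩)]
        · simp [hGdef, hik]
        · intro s hs hsi
          have hs' : s ≠ (k : S) := (Finset.mem_erase.mp hs).1
          simp [hGdef, hs', Ne.symm hsi]
      · simp [hGdef, hik]
  -- helper: dot a vector with a row of Q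
  have hrowQ : ∀ (w : ex → ℤ) (j : ex), (∑ t, w t * Q t j) =
      if j = k then -w k else w j + w k * max (-(B (k : S) j)) 0 := by
    intro w j
    by_cases hj : j = k
    · rw [if_pos hj, Finset.sum_eq_single k]
      · simp [hQdef, hj]
      · intro t _ ht; simp [hQdef, ht, hj]
      · simp
    · rw [if_neg hj, ← Finset.add_sum_erase _ _ (Finset.mem_univ k), add_comm]
      congr 1
      · rw [Finset.sum_eq_single_of_mem j (Finset.mem_erase.mpr ⟨hj, Finset.mem_univ j⟩)]
        · simp [hQdef, hj]
        · intro t ht htj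
          have ht' : t ≠ k := (Finset.mem_erase.mp ht).1
          simp [hQdef, ht', htj]
      · simp [hQdef, hj]
  -- G is an involution
  have hGG : G * G = 1 := by
    ext i j
    rw [Matrix.mul_apply, hrowG (fun s => G s j) i]
    by_cases hik : i = (k : S) <;> by_cases hjk : j = (k : S)
    · subst hik; subst hjk
      simp [hGdef, Matrix.one_apply]
    · subst hik
      rw [if_pos rfl]
      simp [hGdef, Matrix.one_apply, hjk, Ne.symm hjk]
    · subst hjk
      rw [if_neg hik]
      simp [hGdef, Matrix.one_apply, hik]
    · rw [if_neg hik]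
      simp [hGdef, Matrix.one_apply, hjk, Ne.symm hjk]
  -- Λ' = Gᵀ * Λ * G
  have hinner : ∀ s j : S, (Gᵀ * Λ) s j =
      if s = (k : S) then -Λ (k : S) j +
        ∑ i ∈ Finset.univ.erase (k : S), max (B i k) 0 * Λ i j
      else Λ s j := by
    intro s j
    rw [Matrix.mul_apply]
    simp only [Matrix.transpose_apply]
    exact hcolG1 (fun i => Λ i j) s
  have hLam : Λ' = Gᵀ * Λ * G := by
    ext s t
    rw [Matrix.mul_apply]
    simp only [hinner]
    rw [hcolG2]
    by_cases hs : s = (k : S) <;> by_cases ht : t = (k : S)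
    · subst hs; subst ht
      rw [if_pos rfl]
      simp only [eq_self_iff_true, if_true]
      rw [hΛ'4]
      have hd := skew_double_aux Λ hΛskew (fun i => max (B i k) 0) (Finset.univ.erase (k : S))
      have e2 : ∑ j ∈ Finset.univ.erase (k : S), max (B j k) 0 *
            (-Λ (k : S) j + ∑ i ∈ Finset.univ.erase (k : S), max (B i k) 0 * Λ i j) =
          (∑ j ∈ Finset.univ.erase (k : S), max (B j k) 0 * -Λ (k : S) j) +
          ∑ j ∈ Finset.univ.erase (k : S), ∑ i ∈ Finset.univ.erase (k : S),
            max (B j k) 0 * (max (B i k) 0 * Λ i j) := by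
        rw [← Finset.sum_add_distrib]
        refine Finset.sum_congr rfl fun j _ => ?_
        rw [mul_add, Finset.mul_sum]
      have e3 : ∑ j ∈ Finset.univ.erase (k : S), ∑ i ∈ Finset.univ.erase (k : S),
          max (B j k) 0 * (max (B i k) 0 * Λ i j) = 0 := by
        rw [Finset.sum_comm]
        refine Eq.trans ?_ hd
        exact Finset.sum_congr rfl fun i _ => Finset.sum_congr rfl fun j _ => by ring
      have e4 : ∑ i ∈ Finset.univ.erase (k : S), max (B i k) 0 * Λ i (k : S) =
          ∑ j ∈ Finset.univ.erase (k : S), max (B j k) 0 * -Λ (k : S) j :=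
        Finset.sum_congr rfl fun i _ => by rw [hsk (k : S) i]
      rw [e2, e3, e4, hΛkk]
      ring
    · subst hs
      rw [if_neg ht]
      simp only [eq_self_iff_true, if_true]
      rw [hΛ'2 t ht, hfil]
    · subst ht
      rw [if_pos rfl]
      simp only [if_neg hs]
      rw [hΛ'3 s hs, hΛ'2 s hs, hfil]
      have e1 : ∑ i ∈ Finset.univ.erase (k : S), max (B i k) 0 * Λ i s =
          -∑ i ∈ Finset.univ.erase (k : S), max (B i k) 0 * Λ s i := by
        rw [← Finset.sum_neg_distrib]
        exact Finset.sum_congr rfl fun i _ => by rw [hsk s i]; ring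
      rw [e1, hsk s (k : S)]
      ring
    · rw [if_neg ht]
      simp only [if_neg hs]
      exact hΛ'1 s t hs ht
  -- B' = G * B * Q
  have hBeq : B' = G * B * Q := by
    ext i j
    rw [Matrix.mul_apply]
    have hGB : ∀ t : ex, (G * B) i t =
        if i = (k : S) then -B (k : S) t
        else B i t + max (B i k) 0 * B (k : S) t := fun t => by
      rw [Matrix.mul_apply]; exact hrowG (fun s => B s t) i
    simp only [hGB]
    rw [hrowQ]
    by_cases hik : i = (k : S) <;> by_cases hjk : j = k
    · subst hik
      rw [if_pos hjk]
      simp only [eq_self_iff_true, if_true]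
      rw [hB'1 (k : S) j (Or.inr hjk), hjk, hBkk]
      ring
    · subst hik
      rw [if_neg hjk]
      simp only [eq_self_iff_true, if_true]
      rw [hB'1 (k : S) j (Or.inl rfl), hBkk]
      ring
    · rw [if_pos hjk]
      simp only [if_neg hik]
      rw [hB'1 i j (Or.inr hjk), hjk, hBkk]
      ring
    · rw [if_neg hjk]
      simp only [if_neg hik]
      rw [hB'2 i j hik hjk, habs_aux, hBkk]
      ring
  -- Gᵀ * E * Q = E
  have hGE : ∀ (s : S) (t : ex), (Gᵀ * E) s t =
      if s = (k : S) then
        -E (k : S) t + (if (t : S) = (k : S) then 0 else max (B (t : S) k) 0 * E (t : S) t)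
      else E s t := by
    intro s t
    rw [Matrix.mul_apply]
    simp only [Matrix.transpose_apply]
    rw [hcolG1 (fun i => E i t) s]
    by_cases hs : s = (k : S)
    · rw [if_pos hs, if_pos hs]
      congr 1
      by_cases htk : (t : S) = (k : S)
      · rw [if_pos htk]
        refine Finset.sum_eq_zero fun i hi => ?_
        rw [hEoff i t (htk ▸ (Finset.mem_erase.mp hi).1), mul_zero]
      · rw [if_neg htk,
          Finset.sum_eq_single_of_mem (t : S) (Finset.mem_erase.mpr ⟨htk, Finset.mem_univ _⟩)]
        intro i _ hit
        rw [hEoff i t hit, mul_zero]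
    · rw [if_neg hs, if_neg hs]
  have hrel : ∀ j : ex, max (B (j : S) k) 0 * E (j : S) j =
      E (k : S) k * max (-(B (k : S) j)) 0 := by
    intro j
    have h1 := hkey j k
    have h2 : E (j : S) j * B (j : S) k = E (k : S) k * -B (k : S) j := by linarith
    rw [mul_comm, mul_max_of_nonneg _ _ (hEpos j).le, mul_zero, h2,
      mul_max_of_nonneg _ _ (hEpos k).le, mul_zero]
  have hGEQ : Gᵀ * E * Q = E := by
    ext s j
    rw [Matrix.mul_apply, hrowQ (fun t => (Gᵀ * E) s t) j]
    by_cases hs : s = (k : S) <;> by_cases hjk : j = k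
    · subst hs
      rw [if_pos hjk, hGE, hjk]
      simp
    · subst hs
      rw [if_neg hjk, hGE, hGE]
      have hjs : (j : S) ≠ (k : S) := fun h => hjk (Subtype.coe_injective h)
      rw [if_pos rfl, if_pos rfl, if_pos rfl, if_neg hjs,
        hEoff (k : S) j (Ne.symm hjs), hrel j]
      ring
    · rw [if_pos hjk, hGE, if_neg hs, hjk, hEoff s k hs]
      ring
    · rw [if_neg hjk, hGE, hGE, if_neg hs, if_neg hs, hEoff s k hs]
      ring
  -- conclusion
  refine ⟨?_, ?_⟩
  · rw [hLam, Matrix.transpose_mul, Matrix.transpose_mul, Matrix.transpose_transpose, hΛskew]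
    simp [Matrix.neg_mul, Matrix.mul_neg, Matrix.mul_assoc]
  · have h5 : G * (G * B * Q) = B * Q := by
      rw [← Matrix.mul_assoc, ← Matrix.mul_assoc, hGG, Matrix.one_mul]
    rw [hLam, hBeq, Matrix.mul_assoc (Gᵀ * Λ) G (G * B * Q), h5, ← Matrix.mul_assoc,
      Matrix.mul_assoc Gᵀ Λ B, hcomp, Matrix.mul_smul, Matrix.smul_mul, hGEQ]
end

section
/- Fix m ∈ ℕ. Let G be a symmetric m × m integer matrix and Λ a skew-symmetric m × m integer matrix with Λ_{ij} ≡ G_{ij} (mod 2) for all i,j. Let A be a (not necessarily commutative) ring, q ∈ A a central unit, and Y_1,…,Y_m ∈ A elements satisfying Y_i·Y_j = q^{Λ_{ij}}·Y_j·Y_i for all i,j. For a permutation π of {1,…,m} and a ∈ ℕ^m set N_π(a) := Σ_{u,v} a_u a_v G_{uv} − Σ_u a_u G_{uu} + 2·Σ_{(u,v) : π^{-1}(u) > π^{-1}(v)} a_u a_v Λ_{uv}. Then each N_π(a) is divisible by 4, and the element q^{N_π(a)/4}·Y_{π(1)}^{a_{π(1)}}·Y_{π(2)}^{a_{π(2)}}⋯Y_{π(m)}^{a_{π(m)}}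 of A is the same for every permutation π. -/
open Matrix

/-- The exponent `N_π(a) = Σ_{u,v} a_u a_v G_{uv} − Σ_u a_u G_{uu}
+ 2·Σ_{(u,v) : π⁻¹(u) > π⁻¹(v)} a_u a_v Λ_{uv}` used to normalise the quantum cluster
monomial formed in the order determined by the permutation `π`. -/
def Nperm (m : ℕ) (G Λ : Matrix (Fin m) (Fin m) ℤ) (π : Equiv.Perm (Fin m))
    (a : Fin m → ℕ) : ℤ :=
  ∑ u, ∑ v, (a u : ℤ) * (a v : ℤ) * G u v
    - ∑ u, (a u : ℤ) * G u u
    + 2 * ∑ u, ∑ v ∈ Finset.univ.filter (fun v => π.symm v < π.symm u),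
        (a u : ℤ) * (a v : ℤ) * Λ u v

section StmtFiveAux

variable {A : Type*} [Ring A]

private lemma units_zpow_comm (q : Aˣ) (hq : ∀ x : A, (q : A) * x = x * (q : A))
    (z : ℤ) (x : A) : ((q ^ z : Aˣ) : A) * x = x * ((q ^ z : Aˣ) : A) := by
  have h : Commute (q : A) x := hq x
  have hn : ∀ n : ℕ, Commute ((q ^ n : Aˣ) : A) x := fun n => by
    simpa [Units.val_pow_eq_pow_val] using h.pow_left n
  obtain ⟨n, rfl | rfl⟩ := z.eq_nat_or_neg
  · rw [_root_.zpow_natCast]; exact (hn n).eq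
  · rw [_root_.zpow_neg, _root_.zpow_natCast]; exact ((hn n).units_inv_left).eq

private lemma q_rearr (q : Aˣ) (z : ℤ) (U V : A) (h : U = ((q ^ z : Aˣ) : A) * V) :
    V = ((q ^ (-z) : Aˣ) : A) * U := by
  rw [h, ← mul_assoc, ← Units.val_mul, ← _root_.zpow_add]
  simp

private lemma one_pow_comm (q : Aˣ) (hq : ∀ x : A, (q : A) * x = x * (q : A)) (c : ℤ)
    (X Z : A) (h : X * Z = ((q ^ c : Aˣ) : A) * (Z * X)) (k : ℕ) :
    X * Z ^ k = ((q ^ ((k : ℤ) * c) : Aˣ) : A) * (Z ^ k * X) := by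
  induction k with
  | zero => simp
  | succ k ih =>
    have hc := units_zpow_comm q hq
    rw [pow_succ', show (((k + 1 : ℕ) : ℤ)) * c = c + (k : ℤ) * c by push_cast; ring]
    calc X * (Z * Z ^ k) = (X * Z) * Z ^ k := (mul_assoc _ _ _).symm
      _ = ((q ^ c : Aˣ) : A) * (Z * (X * Z ^ k)) := by rw [h, mul_assoc, mul_assoc]
      _ = ((q ^ c : Aˣ) : A) * (Z * (((q ^ ((k : ℤ) * c) : Aˣ) : A) * (Z ^ k * X))) := by
          rw [ih]
      _ = ((q ^ c : Aˣ) : A) * (((q ^ ((k : ℤ) * c) : Aˣ) : A) * (Z * (Z ^ k * X))) := by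
          rw [← mul_assoc Z, ← hc, mul_assoc]
      _ = ((q ^ (c + (k : ℤ) * c) : Aˣ) : A) * (Z * Z ^ k * X) := by
          rw [← mul_assoc, ← Units.val_mul, ← _root_.zpow_add, mul_assoc Z]

private lemma pow_pow_comm (q : Aˣ) (hq : ∀ x : A, (q : A) * x = x * (q : A)) (c : ℤ)
    (X Z : A) (h : X * Z = ((q ^ c : Aˣ) : A) * (Z * X)) (n k : ℕ) :
    X ^ n * Z ^ k = ((q ^ ((n : ℤ) * (k : ℤ) * c) : Aˣ) : A) * (Z ^ k * X ^ n) := by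
  have step1 := one_pow_comm q hq c X Z h k
  have step2 := q_rearr q _ _ _ step1
  have step3 := one_pow_comm q hq (-((k : ℤ) * c)) (Z ^ k) X step2 n
  have step4 := q_rearr q _ _ _ step3
  rw [step4]
  congr 2
  ring

/-- Inversion-type exponent of a list: sum over pairs (later, earlier). -/
private def Ee {m : ℕ} (K : Matrix (Fin m) (Fin m) ℤ) (a : Fin m → ℕ) : List (Fin m) → ℤ
  | [] => 0
  | i :: l => (l.map fun j => (a j : ℤ) * (a i : ℤ) * K j i).sum + Ee K a l

private lemma perm_invariant {m : ℕ} (q : Aˣ) (hq : ∀ x : A, (q : A) * x = x * (q : A))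
    (Λ K : Matrix (Fin m) (Fin m) ℤ) (hK : ∀ i j, K i j - K j i = Λ i j)
    (a : Fin m → ℕ) (Y : Fin m → A)
    (hY : ∀ i j, Y i * Y j = ((q ^ Λ i j : Aˣ) : A) * (Y j * Y i))
    {l₁ l₂ : List (Fin m)} (h : l₁.Perm l₂) :
    ((q ^ Ee K a l₁ : Aˣ) : A) * (l₁.map fun i => Y i ^ a i).prod
      = ((q ^ Ee K a l₂ : Aˣ) : A) * (l₂.map fun i => Y i ^ a i).prod := by
  induction h with
  | nil => rfl
  | cons x h ih =>
      rename_i t₁ t₂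
      have hs : (t₁.map fun j => (a j : ℤ) * (a x : ℤ) * K j x).sum
          = (t₂.map fun j => (a j : ℤ) * (a x : ℤ) * K j x).sum :=
        (h.map _).sum_eq
      have rearr : ∀ (z : ℤ) (P : A),
          ((q ^ z : Aˣ) : A) * (Y x ^ a x * P) = Y x ^ a x * (((q ^ z : Aˣ) : A) * P) := by
        intro z P
        rw [← mul_assoc, units_zpow_comm q hq, mul_assoc]
      simp only [Ee, List.map_cons, List.prod_cons, _root_.zpow_add, Units.val_mul]
      rw [hs, mul_assoc, mul_assoc]
      congr 1
      rw [rearr, rearr, ih]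
  | swap x y l =>
      have hc := units_zpow_comm q hq
      have hpow := pow_pow_comm q hq (Λ x y) (Y x) (Y y) (hY x y) (a x) (a y)
      have hE : Ee K a (y :: x :: l) = (a x : ℤ) * (a y : ℤ) * Λ x y + Ee K a (x :: y :: l) := by
        simp only [Ee, List.map_cons, List.sum_cons]
        linear_combination (a x : ℤ) * (a y : ℤ) * hK x y
      simp only [List.map_cons, List.prod_cons]
      rw [hE, add_comm ((a x : ℤ) * (a y : ℤ) * Λ x y), _root_.zpow_add, Units.val_mul,
        mul_assoc ((q ^ Ee K a (x :: y :: l) : Aˣ) : A),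
        ← mul_assoc (Y y ^ a y),
        ← mul_assoc ((q ^ ((a x : ℤ) * (a y : ℤ) * Λ x y) : Aˣ) : A),
        ← hpow, mul_assoc (Y x ^ a x)]
  | trans h₁ h₂ ih₁ ih₂ => exact ih₁.trans ih₂

private lemma reindex_sum {m : ℕ} (π : Equiv.Perm (Fin m)) (F : Fin m → Fin m → ℤ) :
    ∑ u, ∑ v ∈ Finset.univ.filter (fun v => π.symm v < π.symm u), F u v
      = ∑ p, ∑ r ∈ Finset.univ.filter (fun r => r < p), F (π p) (π r) := by
  rw [← Equiv.sum_comp π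
    (fun u => ∑ v ∈ Finset.univ.filter (fun v => π.symm v < π.symm u), F u v)]
  refine Finset.sum_congr rfl fun p _ => ?_
  rw [Finset.sum_filter, Finset.sum_filter,
    ← Equiv.sum_comp π (fun v => if π.symm v < π.symm (π p) then F (π p) v else 0)]
  simp

private lemma bridge_sum {m : ℕ} (K : Matrix (Fin m) (Fin m) ℤ) (a : Fin m → ℕ) :
    ∀ (n : ℕ) (v : Fin n → Fin m),
    ∑ p, ∑ r ∈ Finset.univ.filter (fun r => r < p),
        (a (v p) : ℤ) * (a (v r) : ℤ) * K (v p) (v r)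
      = Ee K a (List.ofFn v) := by
  intro n
  induction n with
  | zero => intro v; simp [Ee]
  | succ n ih =>
    intro v
    rw [List.ofFn_succ]
    show _ = Ee K a (v 0 :: List.ofFn fun i => v i.succ)
    rw [Ee, ← ih (fun i => v i.succ), Fin.sum_univ_succ]
    have h0 : ∑ r ∈ Finset.univ.filter (fun r => r < (0 : Fin (n+1))),
        (a (v 0) : ℤ) * (a (v r) : ℤ) * K (v 0) (v r) = 0 := by
      rw [Finset.sum_filter]
      simp
    rw [h0, zero_add]
    have hin : ∀ p : Fin n,
        ∑ r ∈ Finset.univ.filter (fun r => r < p.succ),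
          (a (v p.succ) : ℤ) * (a (v r) : ℤ) * K (v p.succ) (v r)
        = (a (v p.succ) : ℤ) * (a (v 0) : ℤ) * K (v p.succ) (v 0)
          + ∑ r ∈ Finset.univ.filter (fun r => r < p),
              (a (v p.succ) : ℤ) * (a (v r.succ) : ℤ) * K (v p.succ) (v r.succ) := by
      intro p
      rw [Finset.sum_filter, Finset.sum_filter, Fin.sum_univ_succ]
      simp [Fin.succ_lt_succ_iff, Fin.succ_pos]
    rw [Finset.sum_congr rfl fun p _ => hin p, Finset.sum_add_distrib]
    have hmap : (List.map (fun j => (a j : ℤ) * (a (v 0) : ℤ) * K j (v 0))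
        (List.ofFn fun i => v i.succ)).sum
        = ∑ p : Fin n, (a (v p.succ) : ℤ) * (a (v 0) : ℤ) * K (v p.succ) (v 0) := by
      rw [List.map_ofFn, List.sum_ofFn]
      rfl
    rw [hmap]

private lemma split_sum {m : ℕ} (π : Equiv.Perm (Fin m)) (F : Fin m → Fin m → ℤ)
    (hF : ∀ u v, F u v = F v u) :
    ∑ u, ∑ v, F u v
      = ∑ u, F u u
        + 2 * ∑ u, ∑ v ∈ Finset.univ.filter (fun v => π.symm v < π.symm u), F u v := by
  have tri : ∀ u v : Fin m, F u v
      = (if π.symm v < π.symm u then F u v else 0)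
        + ((if π.symm u < π.symm v then F u v else 0) + (if v = u then F u v else 0)) := by
    intro u v
    rcases lt_trichotomy (π.symm v) (π.symm u) with h | h | h
    · have h2 : ¬ π.symm u < π.symm v := asymm h
      have h3 : ¬ v = u := by rintro rfl; exact lt_irrefl _ h
      simp [h, h2, h3]
    · have h3 : v = u := π.symm.injective h
      subst h3
      simp
    · have h2 : ¬ π.symm v < π.symm u := asymm h
      have h3 : ¬ v = u := by rintro rfl; exact lt_irrefl _ h
      simp [h, h2, h3]
  have hB : (∑ u, ∑ v, if π.symm u < π.symm v then F u v else 0)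
      = ∑ u, ∑ v, if π.symm v < π.symm u then F u v else 0 := by
    rw [Finset.sum_comm]
    exact Finset.sum_congr rfl fun u _ => Finset.sum_congr rfl fun v _ => by rw [hF]
  calc ∑ u, ∑ v, F u v
      = ∑ u, ∑ v, ((if π.symm v < π.symm u then F u v else 0)
        + ((if π.symm u < π.symm v then F u v else 0) + (if v = u then F u v else 0))) :=
        Finset.sum_congr rfl fun u _ => Finset.sum_congr rfl fun v _ => tri u v
    _ = (∑ u, ∑ v, if π.symm v < π.symm u then F u v else 0)
        + ((∑ u, ∑ v, if π.symm u < π.symm v then F u v else 0)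
          + (∑ u, ∑ v, if v = u then F u v else 0)) := by
        simp [Finset.sum_add_distrib]
    _ = ∑ u, F u u
        + 2 * ∑ u, ∑ v ∈ Finset.univ.filter (fun v => π.symm v < π.symm u), F u v := by
        rw [hB]
        have hC : (∑ u, ∑ v, if v = u then F u v else 0) = ∑ u, F u u := by
          refine Finset.sum_congr rfl fun u _ => ?_
          simp
        have hfil : ∀ u, (∑ v ∈ Finset.univ.filter (fun v => π.symm v < π.symm u), F u v)
            = ∑ v, if π.symm v < π.symm u then F u v else 0 := fun u =>
          Finset.sum_filter _ _
        simp only [hfil]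
        rw [hC]
        ring

private lemma Nperm_key {m : ℕ} (G Λ K : Matrix (Fin m) (Fin m) ℤ) (g e : Fin m → ℤ)
    (a : Fin m → ℕ) (π : Equiv.Perm (Fin m))
    (hGsym : ∀ u v, G v u = G u v)
    (hKK : ∀ u v, G u v + Λ u v = 2 * K u v)
    (hg : ∀ u, G u u = 2 * g u)
    (he : ∀ u, (a u : ℤ) * (a u : ℤ) - (a u : ℤ) = 2 * e u) :
    Nperm m G Λ π a
      = 4 * (∑ u, e u * g u
          + ∑ u, ∑ v ∈ Finset.univ.filter (fun v => π.symm v < π.symm u),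
              (a u : ℤ) * (a v : ℤ) * K u v) := by
  have hsplit : ∑ u, ∑ v, (a u : ℤ) * (a v : ℤ) * G u v
      = ∑ u, (a u : ℤ) * (a u : ℤ) * G u u
        + 2 * ∑ u, ∑ v ∈ Finset.univ.filter (fun v => π.symm v < π.symm u),
            (a u : ℤ) * (a v : ℤ) * G u v :=
    split_sum π (fun u v => (a u : ℤ) * (a v : ℤ) * G u v)
      (fun u v => by show (a u : ℤ) * (a v : ℤ) * G u v = (a v : ℤ) * (a u : ℤ) * G v u
                     rw [hGsym]; ring)
  have hdiag : ∑ u, (a u : ℤ) * (a u : ℤ) * G u u - ∑ u, (a u : ℤ) * G u u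
      = 4 * ∑ u, e u * g u := by
    rw [← Finset.sum_sub_distrib, Finset.mul_sum]
    refine Finset.sum_congr rfl fun u _ => ?_
    linear_combination G u u * he u + 2 * e u * hg u
  have hcomb : (∑ u, ∑ v ∈ Finset.univ.filter (fun v => π.symm v < π.symm u),
        (a u : ℤ) * (a v : ℤ) * G u v)
      + (∑ u, ∑ v ∈ Finset.univ.filter (fun v => π.symm v < π.symm u),
        (a u : ℤ) * (a v : ℤ) * Λ u v)
      = 2 * ∑ u, ∑ v ∈ Finset.univ.filter (fun v => π.symm v < π.symm u),
          (a u : ℤ) * (a v : ℤ) * K u v := by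
    rw [← Finset.sum_add_distrib, Finset.mul_sum]
    refine Finset.sum_congr rfl fun u _ => ?_
    rw [← Finset.sum_add_distrib, Finset.mul_sum]
    refine Finset.sum_congr rfl fun v _ => ?_
    linear_combination (a u : ℤ) * (a v : ℤ) * hKK u v
  unfold Nperm
  rw [hsplit]
  linear_combination hdiag + 2 * hcomb

end StmtFiveAux



/-- Let `G` be symmetric and `Λ` skew-symmetric integer `m × m`
matrices with `Λ_{ij} ≡ G_{ij} (mod 2)`, `A` a ring, `q ∈ A` a central unit and
`Y_1, …, Y_m ∈ A` with `Y_i Y_j = q^{Λ_{ij}} Y_j Y_i`. Then each `N_π(a)` is divisible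
by `4`, and the normalised monomial
`q^{N_π(a)/4}·Y_{π(1)}^{a_{π(1)}} ⋯ Y_{π(m)}^{a_{π(m)}}` is the same for every
permutation `π` of `{1, …, m}`. -/
theorem stmt5 {A : Type*} [Ring A] (m : ℕ) (G Λ : Matrix (Fin m) (Fin m) ℤ)
    (hG : Gᵀ = G) (hΛ : Λᵀ = -Λ)
    (hpar : ∀ i j, (2 : ℤ) ∣ (Λ i j - G i j))
    (q : Aˣ) (hq : ∀ x : A, (q : A) * x = x * (q : A))
    (Y : Fin m → A)
    (hY : ∀ i j, Y i * Y j = ((q ^ Λ i j : Aˣ) : A) * (Y j * Y i)) :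
    (∀ (π : Equiv.Perm (Fin m)) (a : Fin m → ℕ), (4 : ℤ) ∣ Nperm m G Λ π a) ∧
    (∀ (π₁ π₂ : Equiv.Perm (Fin m)) (a : Fin m → ℕ),
      ((q ^ (Nperm m G Λ π₁ a / 4) : Aˣ) : A) *
          (List.ofFn fun i => Y (π₁ i) ^ a (π₁ i)).prod
        = ((q ^ (Nperm m G Λ π₂ a / 4) : Aˣ) : A) *
            (List.ofFn fun i => Y (π₂ i) ^ a (π₂ i)).prod) := by
  classical
  have hGsym : ∀ u v, G v u = G u v := fun u v => by
    have := congrFun (congrFun hG u) v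
    simpa using this
  have hΛskew : ∀ u v, Λ v u = -Λ u v := fun u v => by
    have := congrFun (congrFun hΛ u) v
    simpa using this
  have hΛdiag : ∀ u, Λ u u = 0 := fun u => by
    have := hΛskew u u; linarith
  have hdvd : ∀ u v, (2 : ℤ) ∣ (G u v + Λ u v) := fun u v => by
    obtain ⟨c, hc⟩ := hpar u v
    exact ⟨c + G u v, by linarith⟩
  set K : Matrix (Fin m) (Fin m) ℤ := Matrix.of fun u v => (G u v + Λ u v) / 2 with hKdef
  have hKK : ∀ u v, G u v + Λ u v = 2 * K u v := fun u v =>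
    (Int.mul_ediv_cancel' (hdvd u v)).symm
  have hK : ∀ u v, K u v - K v u = Λ u v := fun u v => by
    have h1 := hKK u v
    have h2 := hKK v u
    have h3 := hGsym u v
    have h4 := hΛskew u v
    linarith
  have hgd : ∀ u, (2 : ℤ) ∣ G u u := fun u => by
    obtain ⟨c, hc⟩ := hpar u u
    have := hΛdiag u
    exact ⟨-c, by linarith⟩
  set g : Fin m → ℤ := fun u => G u u / 2 with hgdef
  have hg : ∀ u, G u u = 2 * g u := fun u => (Int.mul_ediv_cancel' (hgd u)).symm
  have key : ∀ (π : Equiv.Perm (Fin m)) (a : Fin m → ℕ),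
      Nperm m G Λ π a
        = 4 * ((∑ u, (((a u : ℤ) * (a u : ℤ) - (a u : ℤ)) / 2) * g u)
            + Ee K a (List.ofFn ⇑π)) := by
    intro π a
    have he : ∀ u, (a u : ℤ) * (a u : ℤ) - (a u : ℤ)
        = 2 * (((a u : ℤ) * (a u : ℤ) - (a u : ℤ)) / 2) := fun u => by
      refine (Int.mul_ediv_cancel' ?_).symm
      have h := Int.even_mul_succ_self ((a u : ℤ) - 1)
      have h2 : ((a u : ℤ) - 1) * (((a u : ℤ) - 1) + 1)
          = (a u : ℤ) * (a u : ℤ) - (a u : ℤ) := by ring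
      rw [h2] at h
      exact h.two_dvd
    rw [Nperm_key G Λ K g (fun u => (((a u : ℤ) * (a u : ℤ) - (a u : ℤ)) / 2)) a π
      hGsym hKK hg he]
    congr 1
    have hre : (∑ u, ∑ v ∈ Finset.univ.filter (fun v => π.symm v < π.symm u),
          (a u : ℤ) * (a v : ℤ) * K u v)
        = ∑ p, ∑ r ∈ Finset.univ.filter (fun r => r < p),
            (a (π p) : ℤ) * (a (π r) : ℤ) * K (π p) (π r) :=
      reindex_sum π (fun u v => (a u : ℤ) * (a v : ℤ) * K u v)
    rw [hre, bridge_sum K a m ⇑π]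
  refine ⟨fun π a => ⟨_, key π a⟩, fun π₁ π₂ a => ?_⟩
  have hdiv : ∀ π : Equiv.Perm (Fin m), Nperm m G Λ π a / 4
      = (∑ u, (((a u : ℤ) * (a u : ℤ) - (a u : ℤ)) / 2) * g u) + Ee K a (List.ofFn ⇑π) := by
    intro π
    rw [key π a]
    exact Int.mul_ediv_cancel_left _ (by norm_num)
  have hl : ∀ π : Equiv.Perm (Fin m),
      (List.ofFn fun i => Y (π i) ^ a (π i))
        = (List.ofFn ⇑π).map (fun i => Y i ^ a i) :=
    fun π => by simp [List.map_ofFn, Function.comp_def]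
  have hperm : (List.ofFn ⇑π₁).Perm (List.ofFn ⇑π₂) := by
    refine List.perm_of_nodup_nodup_toFinset_eq
      (List.nodup_ofFn.mpr π₁.injective) (List.nodup_ofFn.mpr π₂.injective) ?_
    ext x
    simp only [List.mem_toFinset, List.mem_ofFn]
    constructor
    · intro _; exact ⟨π₂.symm x, π₂.apply_symm_apply x⟩
    · intro _; exact ⟨π₁.symm x, π₁.apply_symm_apply x⟩
  have main := perm_invariant q hq Λ K hK a Y hY hperm
  rw [hdiv π₁, hdiv π₂, hl π₁, hl π₂, _root_.zpow_add, _root_.zpow_add, Units.val_mul, Units.val_mul,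
    mul_assoc, mul_assoc, main]
end

section
/- Let V be a real vector space, Φ ⊆ V a set of vectors, and ht, h : V → ℝ linear functionals with ht(β) > 0 for every β ∈ Φ. For r ∈ ℝ write Φ_{=r} = {β ∈ Φ : h(β) = r·ht(β)}, and similarly Φ_{>r}, Φ_{≥r}, Φ_{<r}, Φ_{≤r} with the corresponding inequality between h(β) and r·ht(β). Then the relation α ⪯ β ⇔ h(α)·ht(β) ≤ h(β)·ht(α) is a total preorder on Φ, and it is convex in the sense of Tingley–Webster; concretely, for every r ∈ ℝ: (1) for every a in the ℝ_{≥0}-cone spanned by Φ_{=r} and every nonzero x in the additive submonoid of V generated by Φ_{>r}, the element a + x does not lie in the additive submonoid generated by Φ_{≤r}; and (2) for every a in the ℝ_{≥0}-cone spanned by Φ_{=r} and every nonzero x in the additive submonoid generated by Φ_{<r}, the element a + x does not lie in the additive submonoid generated by Φ_{≥r}. -/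
/-- The `ℝ_{≥0}`-cone spanned by a subset `Φ'` of a real vector space `V`: all finite
linear combinations of elements of `Φ'` with nonnegative real coefficients. -/
def nnCone {V : Type*} [AddCommGroup V] [Module ℝ V] (Φ' : Set V) : Set V :=
  {v | ∃ (s : Finset V) (c : V → ℝ),
    (∀ x ∈ s, 0 ≤ c x) ∧ (↑s : Set V) ⊆ Φ' ∧ v = ∑ x ∈ s, c x • x}

/-!
Everything reduces to the single linear functional `g = h - r • ht`: it vanishes on the cone
spanned by `Φ_{=r}`, is positive on every nonzero element of the monoid generated by `Φ_{>r}`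
and nonpositive on the monoid generated by `Φ_{≤r}`, so `g (a + x) > 0 ≥ g (a + x)`.
Part (2) is the same argument for `-g`. The preorder compares the slopes `h β / ht β`.
-/

theorem mul_le_mul_trans_of_pos {a b c x y z : ℝ} (hx : 0 < x) (hy : 0 < y) (hz : 0 < z)
    (hab : a * y ≤ b * x) (hbc : b * z ≤ c * y) : a * z ≤ c * x := by
  rw [← div_le_div_iff₀ hx hy] at hab
  rw [← div_le_div_iff₀ hy hz] at hbc
  exact (div_le_div_iff₀ hx hz).1 (hab.trans hbc)

section Closure

variable {M N F : Type*} [AddMonoid M] [AddCommMonoid N] [PartialOrder N]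
  [IsOrderedCancelAddMonoid N] [FunLike F M N] [AddMonoidHomClass F M N]

theorem map_nonneg_of_mem_closure (f : F) {S : Set M} (hS : ∀ v ∈ S, 0 ≤ f v) {x : M}
    (hx : x ∈ AddSubmonoid.closure S) : 0 ≤ f x := by
  induction hx using AddSubmonoid.closure_induction with
  | mem v hv => exact hS v hv
  | zero => simp
  | add x y _ _ hx hy => rw [map_add]; exact add_nonneg hx hy

theorem map_pos_of_mem_closure (f : F) {S : Set M} (hS : ∀ v ∈ S, 0 < f v) {x : M}
    (hx : x ∈ AddSubmonoid.closure S) (hx0 : x ≠ 0) : 0 < f x := by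
  suffices x = 0 ∨ 0 < f x from this.resolve_left hx0
  clear hx0
  induction hx using AddSubmonoid.closure_induction with
  | mem v hv => exact .inr (hS v hv)
  | zero => exact .inl rfl
  | add x y _ _ hx hy =>
    rcases hx with rfl | hx
    · simpa using hy
    rcases hy with rfl | hy
    · simpa using .inr hx
    · exact .inr (by rw [map_add]; exact add_pos hx hy)

end Closure

section Cone

variable {V : Type*} [AddCommGroup V] [Module ℝ V]

theorem map_eq_zero_of_mem_nnCone (g : V →ₗ[ℝ] ℝ) {S : Set V} (hS : ∀ v ∈ S, g v = 0) {a : V}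
    (ha : a ∈ nnCone S) : g a = 0 := by
  obtain ⟨s, c, -, hsub, rfl⟩ := ha
  rw [map_sum]
  exact Finset.sum_eq_zero fun x hx => by rw [map_smul, hS x (hsub hx), smul_zero]

theorem add_notMem_closure_of_separating (g : V →ₗ[ℝ] ℝ) {Z P N : Set V}
    (hZ : ∀ v ∈ Z, g v = 0) (hP : ∀ v ∈ P, 0 < g v) (hN : ∀ v ∈ N, g v ≤ 0)
    {a x : V} (ha : a ∈ nnCone Z) (hx : x ∈ AddSubmonoid.closure P) (hx0 : x ≠ 0) :
    a + x ∉ AddSubmonoid.closure N := by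
  intro hmem
  have hpos : 0 < g (a + x) := by
    rw [map_add, map_eq_zero_of_mem_nnCone g hZ ha, zero_add]
    exact map_pos_of_mem_closure g hP hx hx0
  have hnonpos : 0 ≤ (-g) (a + x) :=
    map_nonneg_of_mem_closure (-g) (fun v hv => neg_nonneg.2 (hN v hv)) hmem
  rw [LinearMap.neg_apply, neg_nonneg] at hnonpos
  exact hnonpos.not_gt hpos

end Cone

/-- Let `V` be a real vector space, `Φ ⊆ V`, and `ht, h : V → ℝ` linear
functionals with `ht(β) > 0` for every `β ∈ Φ`. Then the relation
`α ⪯ β ⇔ h(α)·ht(β) ≤ h(β)·ht(α)` is a total preorder on `Φ` (reflexive, transitive,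
total), and it is convex in the sense of Tingley–Webster: for every `r ∈ ℝ`, writing
`Φ_{=r}, Φ_{>r}, Φ_{≥r}, Φ_{<r}, Φ_{≤r}` for the sets of `β ∈ Φ` whose value `h(β)`
compares as indicated with `r·ht(β)`, one has
(1) for every `a` in the `ℝ_{≥0}`-cone spanned by `Φ_{=r}` and every nonzero `x` in the
additive submonoid generated by `Φ_{>r}`, the element `a + x` does not lie in the
additive submonoid generated by `Φ_{≤r}`; and
(2) for every `a` in the `ℝ_{≥0}`-cone spanned by `Φ_{=r}` and every nonzero `x` in the
additive submonoid generated by `Φ_{<r}`, the element `a + x` does not lie in the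
additive submonoid generated by `Φ_{≥r}`. -/
theorem stmt6 {V : Type*} [AddCommGroup V] [Module ℝ V] (Φ : Set V)
    (ht h : V →ₗ[ℝ] ℝ) (hpos : ∀ β ∈ Φ, 0 < ht β) :
    -- reflexivity
    (∀ α ∈ Φ, h α * ht α ≤ h α * ht α) ∧
    -- transitivity
    (∀ α ∈ Φ, ∀ β ∈ Φ, ∀ γ ∈ Φ,
      h α * ht β ≤ h β * ht α → h β * ht γ ≤ h γ * ht β → h α * ht γ ≤ h γ * ht α) ∧
    -- totality
    (∀ α ∈ Φ, ∀ β ∈ Φ, h α * ht β ≤ h β * ht α ∨ h β * ht α ≤ h α * ht β) ∧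
    -- convexity
    (∀ r : ℝ,
      (∀ a ∈ nnCone {β ∈ Φ | h β = r * ht β},
        ∀ x ∈ AddSubmonoid.closure {β ∈ Φ | r * ht β < h β}, x ≠ 0 →
          a + x ∉ AddSubmonoid.closure {β ∈ Φ | h β ≤ r * ht β}) ∧
      (∀ a ∈ nnCone {β ∈ Φ | h β = r * ht β},
        ∀ x ∈ AddSubmonoid.closure {β ∈ Φ | h β < r * ht β}, x ≠ 0 →
          a + x ∉ AddSubmonoid.closure {β ∈ Φ | r * ht β ≤ h β})) := by
  refine ⟨fun α _ => le_rfl, fun α hα β hβ γ hγ =>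
    mul_le_mul_trans_of_pos (hpos α hα) (hpos β hβ) (hpos γ hγ),
    fun α _ β _ => le_total _ _, fun r => ⟨?_, ?_⟩⟩
  · intro a ha x hx hx0
    refine add_notMem_closure_of_separating (h - r • ht) ?_ ?_ ?_ ha hx hx0 <;>
      intro v hv <;> simp only [LinearMap.sub_apply, LinearMap.smul_apply, smul_eq_mul] <;>
      linarith [hv.2]
  · intro a ha x hx hx0
    refine add_notMem_closure_of_separating (r • ht - h) ?_ ?_ ?_ ha hx hx0 <;>
      intro v hv <;> simp only [LinearMap.sub_apply, LinearMap.smul_apply, smul_eq_mul] <;>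
      linarith [hv.2]
end
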